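/- Given the location ℓ_a ∈ L of superpower a's club good, the set of stage-one core outcomes, ordered componentwise (with choice a above choice 0), forms a lattice, and c^{I*(ℓ_a)} is its largest element. -/
import Mathlib


open Finset

/-- Union of a list of finsets. -/
def listUnion {ι : Type*} [DecidableEq ι] (s : List (Finset ι)) : Finset ι :=
  s.foldr (· ∪ ·) ∅

/-- A stage-one club-formation sequence `I₁, …, I_m` for superpower `a`'s club good, given
the benefit `ben i = g_{ia} (1 - d(i, ℓ_a))` each small country `i` derives from the club
good and the cost functions `ρ i`: the terms are pairwise disjoint, every member of `I_k`
gets a nonnegative payoff once `I₁ ∪ ⋯ ∪ I_k` has joined, and no further nonempty group of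
outside countries could jointly join with everyone getting a nonnegative payoff. -/
def IsClubFormationSeq {ι : Type*} [Fintype ι] [DecidableEq ι]
    (ben : ι → ℝ) (ρ : ι → Finset ι → ℝ) (s : List (Finset ι)) : Prop :=
  s.Pairwise Disjoint ∧
  (∀ k : Fin s.length, ∀ i ∈ s.get k, 0 ≤ ben i - ρ i (listUnion (s.take (k.val + 1)))) ∧
  ¬ ∃ J : Finset ι, J.Nonempty ∧ J ⊆ Finset.univ \ listUnion s ∧
      ∀ i ∈ J, 0 ≤ ben i - ρ i (listUnion s ∪ J)

/-- Stage-one utility of small country `i` under the choice profile `c : ι → Bool`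
(`true` = "join a's club", `false` = "join no club"): members pay the cost share for the
realized club `δ_a(c)`, non-members get `0`. -/
noncomputable def utility1 {ι : Type*} [Fintype ι] [DecidableEq ι]
    (ben : ι → ℝ) (ρ : ι → Finset ι → ℝ) (c : ι → Bool) (i : ι) : ℝ :=
  if c i then ben i - ρ i (Finset.univ.filter fun j => c j = true) else 0

/-- A stage-one choice profile is in the core if no nonempty coalition `T` can change its
own choices so that every member of `T` is strictly better off. -/
def InCore1 {ι : Type*} [Fintype ι] [DecidableEq ι]
    (ben : ι → ℝ) (ρ : ι → Finset ι → ℝ) (c : ι → Bool) : Prop :=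
  ¬ ∃ (T : Finset ι) (c' : ι → Bool), T.Nonempty ∧ (∀ i, i ∉ T → c' i = c i) ∧
      ∀ i ∈ T, utility1 ben ρ c i < utility1 ben ρ c' i

section Aux

variable {ι : Type*} [Fintype ι] [DecidableEq ι]

lemma mem_listUnion {s : List (Finset ι)} {i : ι} :
    i ∈ listUnion s ↔ ∃ t ∈ s, i ∈ t := by
  induction s with
  | nil => simp [listUnion]
  | cons h t ih =>
      simp only [listUnion, List.foldr] at ih ⊢
      simp [Finset.mem_union, ih]

lemma listUnion_take_subset (s : List (Finset ι)) (n : ℕ) :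
    listUnion (s.take n) ⊆ listUnion s := by
  intro i hi
  rw [mem_listUnion] at hi ⊢
  obtain ⟨t, ht, hit⟩ := hi
  exact ⟨t, List.mem_of_mem_take ht, hit⟩

lemma rho_mono (ρ : ι → Finset ι → ℝ)
    (hρdec : ∀ i (E E' : Finset ι), E ⊂ E' → ρ i E' < ρ i E)
    (i : ι) {E E' : Finset ι} (h : E ⊆ E') : ρ i E' ≤ ρ i E := by
  rcases h.ssubset_or_eq with h' | rfl
  · exact (hρdec i _ _ h').le
  · exact le_rfl

variable (ben : ι → ℝ) (ρ : ι → Finset ι → ℝ)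

/-- In a core profile, every member gets nonnegative utility. -/
lemma core_member_nonneg {c : ι → Bool} (hc : InCore1 ben ρ c)
    (i : ι) (hi : c i = true) :
    0 ≤ ben i - ρ i (Finset.univ.filter fun j => c j = true) := by
  by_contra hneg
  push_neg at hneg
  apply hc
  refine ⟨{i}, fun j => if j = i then false else c j, ⟨i, Finset.mem_singleton_self i⟩,
    ?_, ?_⟩
  · intro j hj
    rw [Finset.mem_singleton] at hj
    simp [hj]
  · intro j hj
    rw [Finset.mem_singleton] at hj
    subst hj
    have h1 : utility1 ben ρ c j = ben j - ρ j (Finset.univ.filter fun k => c k = true) := by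
      simp [utility1, hi]
    have h2 : utility1 ben ρ (fun k => if k = j then false else c k) j = 0 := by
      simp [utility1]
    rw [h1, h2]
    exact hneg

/-- In a core profile, no nonempty group of outsiders can all strictly gain by joining. -/
lemma core_no_join {c : ι → Bool} (hc : InCore1 ben ρ c) (J : Finset ι)
    (hJne : J.Nonempty) (hout : ∀ i ∈ J, c i = false) :
    ∃ i ∈ J, ben i - ρ i ((Finset.univ.filter fun j => c j = true) ∪ J) ≤ 0 := by
  by_contra h
  push_neg at h
  apply hc
  refine ⟨J, fun j => if j ∈ J then true else c j, hJne, fun j hj => by simp [hj], ?_⟩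
  intro i hi
  have hci := hout i hi
  have hδ : (Finset.univ.filter fun j => (if j ∈ J then true else c j) = true)
      = (Finset.univ.filter fun j => c j = true) ∪ J := by
    ext j
    by_cases hj : j ∈ J <;> simp [hj]
  have h1 : utility1 ben ρ c i = 0 := by simp [utility1, hci]
  have h2 : utility1 ben ρ (fun j => if j ∈ J then true else c j) i
      = ben i - ρ i ((Finset.univ.filter fun j => c j = true) ∪ J) := by
    simp only [utility1, hi, if_true, hδ]
  rw [h1, h2]
  exact h i hi

/-- Sufficient condition for membership in the core. -/
lemma core_of
    (hρdec : ∀ i (E E' : Finset ι), E ⊂ E' → ρ i E' < ρ i E) {c : ι → Bool}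
    (ha : ∀ i, c i = true → 0 ≤ ben i - ρ i (Finset.univ.filter fun j => c j = true))
    (hb : ∀ J : Finset ι, J.Nonempty → (∀ i ∈ J, c i = false) →
        ∃ i ∈ J, ben i - ρ i ((Finset.univ.filter fun j => c j = true) ∪ J) ≤ 0) :
    InCore1 ben ρ c := by
  rintro ⟨T, c', hTne, hout, himp⟩
  set δ : Finset ι := Finset.univ.filter fun j => c j = true with hδdef
  set δ' : Finset ι := Finset.univ.filter fun j => c' j = true with hδ'def
  by_cases hJ : (δ' \ δ).Nonempty
  · obtain ⟨i, hiJ, hle⟩ := hb (δ' \ δ) hJ (by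
      intro i hi
      rw [Finset.mem_sdiff] at hi
      have := hi.2
      simp only [hδdef, Finset.mem_filter, Finset.mem_univ, true_and] at this
      exact Bool.eq_false_iff.mpr (fun hh => this hh))
    rw [Finset.mem_sdiff] at hiJ
    have hc'i : c' i = true := by
      have := hiJ.1
      simpa [hδ'def] using this
    have hci : c i = false := by
      have := hiJ.2
      simp only [hδdef, Finset.mem_filter, Finset.mem_univ, true_and] at this
      exact Bool.eq_false_iff.mpr (fun hh => this hh)
    have hiT : i ∈ T := by
      by_contra hiT
      have := hout i hiT
      rw [hc'i, hci] at this
      exact Bool.noConfusion this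
    have hlt := himp i hiT
    have h1 : utility1 ben ρ c i = 0 := by simp [utility1, hci]
    have h2 : utility1 ben ρ c' i = ben i - ρ i δ' := by simp [utility1, hc'i, hδ'def]
    have hsub : δ' ⊆ δ ∪ (δ' \ δ) := by
      intro j hj
      rw [Finset.mem_union, Finset.mem_sdiff]
      by_cases hjδ : j ∈ δ
      · exact Or.inl hjδ
      · exact Or.inr ⟨hj, hjδ⟩
    have hmono := rho_mono ρ hρdec i hsub
    rw [h1, h2] at hlt
    linarith
  · have hsub : δ' ⊆ δ := by
      rw [Finset.not_nonempty_iff_eq_empty, Finset.sdiff_eq_empty_iff_subset] at hJ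
      exact hJ
    obtain ⟨i, hiT⟩ := hTne
    have hlt := himp i hiT
    cases hc'i : c' i with
    | false =>
        have h2 : utility1 ben ρ c' i = 0 := by simp [utility1, hc'i]
        rw [h2] at hlt
        cases hci : c i with
        | false =>
            have h1 : utility1 ben ρ c i = 0 := by simp [utility1, hci]
            rw [h1] at hlt
            exact lt_irrefl _ hlt
        | true =>
            have h1 : utility1 ben ρ c i = ben i - ρ i δ := by simp [utility1, hci, hδdef]
            rw [h1] at hlt
            have := ha i hci
            linarith
    | true =>
        have hiδ' : i ∈ δ' := by simp [hδ'def, hc'i]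
        have hiδ : i ∈ δ := hsub hiδ'
        have hci : c i = true := by
          simpa [hδdef] using hiδ
        have h1 : utility1 ben ρ c i = ben i - ρ i δ := by simp [utility1, hci, hδdef]
        have h2 : utility1 ben ρ c' i = ben i - ρ i δ' := by simp [utility1, hc'i, hδ'def]
        have hmono := rho_mono ρ hρdec i hsub
        rw [h1, h2] at hlt
        linarith

/-- Any two core profiles are pointwise comparable. -/
lemma core_chain
    (hρdec : ∀ i (E E' : Finset ι), E ⊂ E' → ρ i E' < ρ i E) {c₁ c₂ : ι → Bool}
    (h1 : InCore1 ben ρ c₁) (h2 : InCore1 ben ρ c₂) :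
    (∀ i, c₁ i ≤ c₂ i) ∨ (∀ i, c₂ i ≤ c₁ i) := by
  set A : Finset ι := Finset.univ.filter fun j => c₁ j = true with hA
  set B : Finset ι := Finset.univ.filter fun j => c₂ j = true with hB
  by_contra h
  push_neg at h
  obtain ⟨⟨i, hi⟩, ⟨j, hj⟩⟩ := h
  obtain ⟨hi2, hi1⟩ := Bool.lt_iff.mp hi
  obtain ⟨hj1, hj2⟩ := Bool.lt_iff.mp hj
  -- B \ A is a profitable joining coalition for c₁, contradiction.
  have hBAne : (B \ A).Nonempty := by
    refine ⟨j, ?_⟩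
    rw [Finset.mem_sdiff]
    constructor
    · simp [hB, hj2]
    · simp [hA, hj1]
  obtain ⟨k, hkBA, hk⟩ := core_no_join ben ρ h1 (B \ A) hBAne (by
    intro k hk
    rw [Finset.mem_sdiff] at hk
    have := hk.2
    simp only [hA, Finset.mem_filter, Finset.mem_univ, true_and] at this
    exact Bool.eq_false_iff.mpr (fun hh => this hh))
  rw [Finset.mem_sdiff] at hkBA
  have hkB : c₂ k = true := by
    have := hkBA.1
    simpa [hB] using this
  have hknn := core_member_nonneg ben ρ h2 k hkB
  rw [← hB] at hknn
  have hunion : A ∪ (B \ A) = A ∪ B := Finset.union_sdiff_self_eq_union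
  rw [← hA, hunion] at hk
  have hss : B ⊂ A ∪ B := by
    refine Finset.ssubset_iff_of_subset Finset.subset_union_right |>.mpr ⟨i, ?_, ?_⟩
    · exact Finset.mem_union_left _ (by simp [hA, hi1])
    · simp [hB, hi2]
  have := hρdec k B (A ∪ B) hss
  linarith

end Aux

/-- **The stage-one core is a lattice with largest element `c^{I*(ℓ_a)}`** (Proposition 3).
Ordering choice profiles componentwise (with the choice `a`, i.e. `true`, above the choice
`0`, i.e. `false`), the set of stage-one core outcomes is closed under pointwise meet and
join, and the profile `c^{I*(ℓ_a)}` obtained from the club-formation sequence is a core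
outcome above every core outcome. -/
theorem core1_lattice_and_largest
    {ι L : Type*} [Fintype ι] [DecidableEq ι] [MetricSpace L] [Fintype L]
    (loc : ι → L) (ℓa : L) (g : ι → ℝ) (ρ : ι → Finset ι → ℝ)
    (hg : ∀ i, 0 ≤ g i)
    (hd : ∀ i, dist (loc i) ℓa ≤ 1)
    (hρpos : ∀ i (E : Finset ι), 0 < ρ i E)
    (hρdec : ∀ i (E E' : Finset ι), E ⊂ E' → ρ i E' < ρ i E)
    (s : List (Finset ι))
    (hs : IsClubFormationSeq (fun i => g i * (1 - dist (loc i) ℓa)) ρ s) :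
    (∀ c₁ c₂ : ι → Bool,
        InCore1 (fun i => g i * (1 - dist (loc i) ℓa)) ρ c₁ →
        InCore1 (fun i => g i * (1 - dist (loc i) ℓa)) ρ c₂ →
        InCore1 (fun i => g i * (1 - dist (loc i) ℓa)) ρ (fun i => c₁ i && c₂ i) ∧
        InCore1 (fun i => g i * (1 - dist (loc i) ℓa)) ρ (fun i => c₁ i || c₂ i)) ∧
    InCore1 (fun i => g i * (1 - dist (loc i) ℓa)) ρ (fun i => decide (i ∈ listUnion s)) ∧
    (∀ c : ι → Bool, InCore1 (fun i => g i * (1 - dist (loc i) ℓa)) ρ c →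
        ∀ i, c i ≤ decide (i ∈ listUnion s)) := by
  set ben : ι → ℝ := fun i => g i * (1 - dist (loc i) ℓa) with hben
  obtain ⟨-, hseq, hmax⟩ := hs
  -- the profile corresponding to I* = listUnion s
  set cstar : ι → Bool := fun i => decide (i ∈ listUnion s) with hcstar
  have hδstar : (Finset.univ.filter fun j => cstar j = true) = listUnion s := by
    ext j; simp [hcstar]
  -- cstar is in the core
  have hstar_core : InCore1 ben ρ cstar := by
    apply core_of ben ρ hρdec
    · intro i hi
      rw [hδstar]
      have hiU : i ∈ listUnion s := by simpa [hcstar] using hi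
      rw [mem_listUnion] at hiU
      obtain ⟨t, ht, hit⟩ := hiU
      rw [List.mem_iff_get] at ht
      obtain ⟨k, rfl⟩ := ht
      have h0 := hseq k i hit
      have hsub := listUnion_take_subset s (k.val + 1)
      have hmono := rho_mono ρ hρdec i hsub
      linarith
    · intro J hJne hJout
      by_contra h
      push_neg at h
      apply hmax
      refine ⟨J, hJne, ?_, ?_⟩
      · intro i hiJ
        rw [Finset.mem_sdiff]
        refine ⟨Finset.mem_univ i, ?_⟩
        have := hJout i hiJ
        simpa [hcstar] using this
      · intro i hiJ
        have := h i hiJ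
        rw [hδstar] at this
        linarith
  -- every core profile is below cstar
  have hbelow : ∀ c : ι → Bool, InCore1 ben ρ c → ∀ i, c i ≤ cstar i := by
    intro c hc
    have hsub : (Finset.univ.filter fun j => c j = true) ⊆ listUnion s := by
      by_contra hns
      have hDne : ((Finset.univ.filter fun j => c j = true) \ listUnion s).Nonempty := by
        rw [Finset.sdiff_nonempty]
        exact hns
      apply hmax
      refine ⟨(Finset.univ.filter fun j => c j = true) \ listUnion s, hDne, ?_, ?_⟩
      · intro i hi
        rw [Finset.mem_sdiff] at hi ⊢
        exact ⟨Finset.mem_univ i, hi.2⟩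
      · intro i hi
        rw [Finset.mem_sdiff] at hi
        have hci : c i = true := by
          have := hi.1
          simpa using this
        have hnn := core_member_nonneg ben ρ hc i hci
        have hsub2 : (Finset.univ.filter fun j => c j = true)
            ⊆ listUnion s ∪ ((Finset.univ.filter fun j => c j = true) \ listUnion s) := by
          intro j hj
          rw [Finset.mem_union, Finset.mem_sdiff]
          by_cases hjU : j ∈ listUnion s
          · exact Or.inl hjU
          · exact Or.inr ⟨hj, hjU⟩
        have hmono := rho_mono ρ hρdec i hsub2
        linarith
    intro i
    cases hci : c i with
    | false => exact Bool.false_le _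
    | true =>
        have hiU : i ∈ listUnion s := hsub (by simp [hci])
        have : cstar i = true := by simp [hcstar, hiU]
        simp [this]
  refine ⟨?_, hstar_core, hbelow⟩
  intro c₁ c₂ h1 h2
  rcases core_chain ben ρ hρdec h1 h2 with hle | hle
  · have hand : (fun i => c₁ i && c₂ i) = c₁ := by
      funext i
      cases h : c₁ i
      · simp
      · have := hle i
        rw [h] at this
        have h2i : c₂ i = true := by
          cases h' : c₂ i
          · rw [h'] at this; exact absurd this (by simp)
          · rfl
        simp [h2i]
    have hor : (fun i => c₁ i || c₂ i) = c₂ := by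
      funext i
      cases h : c₁ i
      · simp
      · have := hle i
        rw [h] at this
        have h2i : c₂ i = true := by
          cases h' : c₂ i
          · rw [h'] at this; exact absurd this (by simp)
          · rfl
        simp [h2i]
    rw [hand, hor]
    exact ⟨h1, h2⟩
  · have hand : (fun i => c₁ i && c₂ i) = c₂ := by
      funext i
      cases h : c₂ i
      · simp
      · have := hle i
        rw [h] at this
        have h1i : c₁ i = true := by
          cases h' : c₁ i
          · rw [h'] at this; exact absurd this (by simp)
          · rfl
        simp [h1i]
    have hor : (fun i => c₁ i || c₂ i) = c₁ := by
      funext i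
      cases h : c₂ i
      · simp
      · have := hle i
        rw [h] at this
        have h1i : c₁ i = true := by
          cases h' : c₁ i
          · rw [h'] at this; exact absurd this (by simp)
          · rfl
        simp [h1i]
    rw [hand, hor]
    exact ⟨h2, h1⟩
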